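/- Suppose the conditional label-flipping probability η: ℝ^d → [0, 1/2] satisfies ℙ(η(x) ≥ 1/2 - t) ≤ A·t^{α/(1-α)} for all t ∈ [0, 1/2], with A > 0 and α ∈ (0,1). Then E[η(x)] ≤ 1/2 - α·(1/A)^{(1-α)/α}. -/

import Mathlib

/-!
With `Z = 1/2 - η` and `β = α / (1 - α)`, the tail formula gives, for every `T ≥ 0`,
`E[Z] ≥ ∫₀ᵀ P(Z ≥ t) dt ≥ ∫₀ᵀ (1 - A tᵝ) dt`, the noise condition bounding `P(Z < t)` for `t ≤ 1/2`.
Take `T = (1/A)^(1/β)`, the zero of the integrand; `T ≤ 1/2` because the condition at `t = 1/2`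
reads `1 ≤ A (1/2)ᵝ`. Then the right-hand side is `β/(β+1) · T = α T`.
-/

open Real MeasureTheory Set

section TailBound

variable {Ω : Type*} [MeasurableSpace Ω] {μ : Measure Ω}

lemma antitone_measureReal_le (Z : Ω → ℝ) [IsFiniteMeasure μ] :
    Antitone fun t ↦ μ.real {ω | t ≤ Z ω} :=
  fun _ _ hst ↦ measureReal_mono fun _ hω ↦ hst.trans hω

lemma integral_min_eq_setIntegral_Ioc_measureReal_le [IsFiniteMeasure μ] {Z : Ω → ℝ}
    (hZ : Integrable Z μ) (hZ0 : 0 ≤ᵐ[μ] Z) {T : ℝ} (hT : 0 ≤ T) :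
    ∫ ω, min (Z ω) T ∂μ = ∫ t in Ioc 0 T, μ.real {ω | t ≤ Z ω} := by
  have hmin : Integrable (fun ω ↦ min (Z ω) T) μ := hZ.inf (integrable_const T)
  rw [hmin.integral_eq_integral_Ioc_meas_le (M := T)
    (by filter_upwards [hZ0] with ω hω using le_min hω hT)
    (.of_forall fun ω ↦ min_le_right _ _)]
  refine setIntegral_congr_fun measurableSet_Ioc fun t ht ↦ ?_
  simp only [le_min_iff, ht.2, and_true]

lemma measureReal_le_eq_one_sub [IsProbabilityMeasure μ] {Z : Ω → ℝ} (hZ : AEMeasurable Z μ)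
    (t : ℝ) : μ.real {ω | t ≤ Z ω} = 1 - μ.real {ω | Z ω < t} := by
  rw [← probReal_compl_eq_one_sub₀ (nullMeasurableSet_lt hZ aemeasurable_const)]
  congr 1
  ext ω
  simp

theorem setIntegral_one_sub_le_integral [IsProbabilityMeasure μ] {Z : Ω → ℝ}
    (hZ : Integrable Z μ) (hZ0 : 0 ≤ᵐ[μ] Z) {T : ℝ} (hT : 0 ≤ T) {F : ℝ → ℝ}
    (hF : IntegrableOn F (Ioc 0 T)) (hcdf : ∀ t ∈ Ioc 0 T, μ.real {ω | Z ω < t} ≤ F t) :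
    ∫ t in Ioc 0 T, (1 - F t) ≤ ∫ ω, Z ω ∂μ := by
  have htail : IntegrableOn (fun t ↦ μ.real {ω | t ≤ Z ω}) (Ioc 0 T) :=
    (intervalIntegrable_iff_integrableOn_Ioc_of_le hT).mp
      (antitone_measureReal_le Z).intervalIntegrable
  calc ∫ t in Ioc 0 T, (1 - F t)
      ≤ ∫ t in Ioc 0 T, μ.real {ω | t ≤ Z ω} := by
        refine setIntegral_mono_on ((integrableOn_const (by simp)).sub hF) htail
          measurableSet_Ioc fun t ht ↦ ?_
        rw [measureReal_le_eq_one_sub hZ.aemeasurable]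
        linarith [hcdf t ht]
    _ = ∫ ω, min (Z ω) T ∂μ := (integral_min_eq_setIntegral_Ioc_measureReal_le hZ hZ0 hT).symm
    _ ≤ ∫ ω, Z ω ∂μ :=
        integral_mono (hZ.inf (integrable_const T)) hZ fun ω ↦ min_le_left _ _

end TailBound

lemma setIntegral_Ioc_one_sub_mul_rpow (A : ℝ) {β T : ℝ} (hβ : -1 < β) (hT : 0 ≤ T) :
    ∫ t in Ioc 0 T, (1 - A * t ^ β) = T - A * (T ^ (β + 1) / (β + 1)) := by
  rw [← intervalIntegral.integral_of_le hT, intervalIntegral.integral_sub intervalIntegrable_const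
    ((intervalIntegral.intervalIntegrable_rpow' hβ).const_mul A), intervalIntegral.integral_const,
    intervalIntegral.integral_const_mul, integral_rpow (Or.inl hβ),
    zero_rpow (by linarith : β + 1 ≠ 0)]
  simp

lemma setIntegral_Ioc_one_sub_mul_rpow_root {A β : ℝ} (hA : 0 < A) (hβ : 0 < β) :
    ∫ t in Ioc 0 ((1 / A) ^ (1 / β)), (1 - A * t ^ β) = β / (β + 1) * (1 / A) ^ (1 / β) := by
  have hroot : ((1 / A) ^ (1 / β)) ^ β = 1 / A := by
    rw [← rpow_mul (by positivity), one_div_mul_cancel hβ.ne', rpow_one]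
  rw [setIntegral_Ioc_one_sub_mul_rpow A (by linarith) (by positivity),
    rpow_add' (by positivity) (by linarith), rpow_one, hroot]
  field_simp
  ring

lemma rpow_one_div_le_of_one_le_mul_rpow {A β s : ℝ} (hA : 0 < A) (hβ : 0 < β) (hs : 0 ≤ s)
    (h : 1 ≤ A * s ^ β) : (1 / A) ^ (1 / β) ≤ s := by
  calc (1 / A) ^ (1 / β) ≤ (s ^ β) ^ (1 / β) := by
        gcongr
        rw [div_le_iff₀ hA]
        linarith
    _ = s := by rw [← rpow_mul hs, mul_one_div_cancel hβ.ne', rpow_one]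

lemma div_div_one_sub_add_one {α : ℝ} (hα : α ≠ 1) : α / (1 - α) / (α / (1 - α) + 1) = α := by
  have h1α : 1 - α ≠ 0 := sub_ne_zero.mpr hα.symm
  field_simp
  ring

/-- Under the (A,α)-Tsybakov noise condition, the Bayes error E[η(x)] is at most
1/2 - α·(1/A)^{(1-α)/α}. -/
theorem bayes_error_bound {Ω : Type*} [MeasurableSpace Ω] (μ : Measure Ω)
    [IsProbabilityMeasure μ] (η : Ω → ℝ) (hmeas : Measurable η)
    (hrange : ∀ ω, η ω ∈ Set.Icc (0 : ℝ) (1 / 2))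
    (A α : ℝ) (hA : 0 < A) (hα : α ∈ Set.Ioo (0 : ℝ) 1)
    (h : ∀ t ∈ Set.Icc (0 : ℝ) (1 / 2),
      μ {ω | 1 / 2 - t ≤ η ω} ≤ ENNReal.ofReal (A * t ^ (α / (1 - α)))) :
    ∫ ω, η ω ∂μ ≤ 1 / 2 - α * (1 / A) ^ ((1 - α) / α) := by
  obtain ⟨hα0, hα1⟩ := hα
  set β := α / (1 - α)
  have hβ : 0 < β := div_pos hα0 (by linarith)
  rw [show (1 - α) / α = 1 / β by simp [β], ← div_div_one_sub_add_one hα1.ne, ← setIntegral_Ioc_one_sub_mul_rpow_root hA hβ]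
  set T := (1 / A) ^ (1 / β)
  have hT : T ≤ 1 / 2 := by
    refine rpow_one_div_le_of_one_le_mul_rpow hA hβ (by norm_num) ?_
    have := h (1 / 2) ⟨by norm_num, le_rfl⟩
    simp only [sub_self, (hrange _).1, ofPred_true, measure_univ] at this
    exact ENNReal.one_le_ofReal.mp this
  have hcdf : ∀ t ∈ Ioc 0 T, μ.real {ω | 1 / 2 - η ω < t} ≤ A * t ^ β := fun t ht ↦
    (measureReal_mono fun ω (hω : 1 / 2 - η ω < t) ↦ show 1 / 2 - t ≤ η ω by linarith).trans
      (ENNReal.toReal_le_of_le_ofReal (mul_nonneg hA.le (rpow_nonneg ht.1.le _))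
        (h t ⟨ht.1.le, ht.2.trans hT⟩))
  have hη : Integrable η μ :=
    .of_bound hmeas.aestronglyMeasurable (1 / 2) (.of_forall fun ω ↦ by
      rw [norm_of_nonneg (hrange ω).1]; exact (hrange ω).2)
  have hmean := setIntegral_one_sub_le_integral (Z := fun ω ↦ 1 / 2 - η ω)
    ((integrable_const _).sub hη)
    (.of_forall fun ω ↦ sub_nonneg.mpr (hrange ω).2) (by positivity)
    ((intervalIntegrable_iff_integrableOn_Ioc_of_le (by positivity)).mp
      ((intervalIntegral.intervalIntegrable_rpow' (by linarith)).const_mul A)) hcdf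
  rw [integral_sub (integrable_const _) hη, integral_const, probReal_univ, one_smul] at hmean
  linarith
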